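/- Let ψ ∈ ℝ^{p×s} and H ∈ ℝ^{p×m} have full column rank (s ≤ p, m ≤ p), and let Hᵀψ = ϱ ϑᵀ be a rank factorization with ϱ ∈ ℝ^{m×q} and ϑ ∈ ℝ^{s×q} of full column rank q. Then H ϱ_⊥ = ψ_⊥ g, where g := (ψ_⊥ᵀ ψ_⊥)⁻¹ ψ_⊥ᵀ H ϱ_⊥ ∈ ℝ^{(p−s)×(m−q)}, and g has full column rank m − q (in particular m − q ≤ p − s). (Intermediate claim in the proof of Theorem 1.) -/

import Mathlib

open Matrix

-- injectivity from full column rank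
lemma aux_inj {a b : ℕ} (A : Matrix (Fin a) (Fin b) ℝ) (h : A.rank = b) :
    Function.Injective A.mulVecLin := by
  rw [← LinearMap.ker_eq_bot]
  have h1 := LinearMap.finrank_range_add_finrank_ker A.mulVecLin
  rw [show Module.finrank ℝ (Fin b → ℝ) = b by simp] at h1
  have : Module.finrank ℝ (LinearMap.ker A.mulVecLin) = 0 := by
    have : A.rank = Module.finrank ℝ (LinearMap.range A.mulVecLin) := rfl
    omega
  exact Submodule.finrank_eq_zero.mp this

lemma aux_rank_mul {a b c : ℕ} (A : Matrix (Fin a) (Fin b) ℝ)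
    (B : Matrix (Fin b) (Fin c) ℝ) (h : A.rank = b) : (A * B).rank = B.rank := by
  have hinj := aux_inj A h
  rw [Matrix.rank, Matrix.rank, mulVecLin_mul, LinearMap.range_comp]
  exact (LinearEquiv.finrank_eq
    (Submodule.equivMapOfInjective A.mulVecLin hinj (LinearMap.range B.mulVecLin))).symm


/-- Intermediate claim in the proof of Theorem 1: `H ϱ⊥ = ψ⊥ g` with
`g := (ψ⊥ᵀψ⊥)⁻¹ψ⊥ᵀHϱ⊥` of full column rank `m − q`. -/
theorem stmt6 {p s m q : ℕ} (hsp : s ≤ p) (hmp : m ≤ p)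
    (ψ : Matrix (Fin p) (Fin s) ℝ) (hψ : ψ.rank = s)
    (H : Matrix (Fin p) (Fin m) ℝ) (hH : H.rank = m)
    (ϱ : Matrix (Fin m) (Fin q) ℝ) (ϑ : Matrix (Fin s) (Fin q) ℝ)
    (hfact : Hᵀ * ψ = ϱ * ϑᵀ) (hϱ : ϱ.rank = q) (hϑ : ϑ.rank = q)
    (ψperp : Matrix (Fin p) (Fin (p - s)) ℝ)
    (hψperp : ψᵀ * ψperp = 0) (hψperpr : ψperp.rank = p - s)
    (ϱperp : Matrix (Fin m) (Fin (m - q)) ℝ)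
    (hϱperp : ϱᵀ * ϱperp = 0) (hϱperpr : ϱperp.rank = m - q) :
    H * ϱperp = ψperp * ((ψperpᵀ * ψperp)⁻¹ * ψperpᵀ * H * ϱperp) ∧
    ((ψperpᵀ * ψperp)⁻¹ * ψperpᵀ * H * ϱperp).rank = m - q ∧
    m - q ≤ p - s := by
  -- ψᵀ H ϱperp = 0
  have key : ψᵀ * (H * ϱperp) = 0 := by
    have h1 : ψᵀ * H = ϑ * ϱᵀ := by
      have := congrArg Matrix.transpose hfact
      simpa [Matrix.transpose_mul] using this
    rw [← Matrix.mul_assoc, h1, Matrix.mul_assoc, hϱperp, Matrix.mul_zero]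
  -- range ψperp = ker ψᵀ
  have hle : LinearMap.range ψperp.mulVecLin ≤ LinearMap.ker ψᵀ.mulVecLin := by
    rintro x ⟨v, rfl⟩
    simp only [LinearMap.mem_ker, mulVecLin_apply, mulVec_mulVec, hψperp]
    simp
  have hkerdim : Module.finrank ℝ (LinearMap.ker ψᵀ.mulVecLin) = p - s := by
    have h1 := LinearMap.finrank_range_add_finrank_ker ψᵀ.mulVecLin
    rw [show Module.finrank ℝ (Fin p → ℝ) = p by simp] at h1
    have h2 : ψᵀ.rank = s := by rw [Matrix.rank_transpose, hψ]
    have h3 : ψᵀ.rank = Module.finrank ℝ (LinearMap.range ψᵀ.mulVecLin) := rfl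
    omega
  have hrangedim : Module.finrank ℝ (LinearMap.range ψperp.mulVecLin) = p - s := hψperpr
  have heq : LinearMap.range ψperp.mulVecLin = LinearMap.ker ψᵀ.mulVecLin :=
    Submodule.eq_of_le_of_finrank_le hle (by rw [hkerdim, hrangedim])
  -- columns of H ϱperp lie in range ψperp
  have hcol : ∀ j : Fin (m - q), ∃ y : Fin (p - s) → ℝ,
      ψperp.mulVec y = fun i => (H * ϱperp) i j := by
    intro j
    have : (fun i => (H * ϱperp) i j) ∈ LinearMap.ker ψᵀ.mulVecLin := by
      simp only [LinearMap.mem_ker, mulVecLin_apply]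
      ext i
      have := congrFun (congrFun key i) j
      simp only [Matrix.mul_apply, Matrix.zero_apply] at this
      simpa [Matrix.mulVec, dotProduct, Matrix.mul_apply] using this
    rw [← heq] at this
    obtain ⟨y, hy⟩ := this
    exact ⟨y, hy⟩
  choose Y hY using hcol
  set X : Matrix (Fin (p - s)) (Fin (m - q)) ℝ := Matrix.of (fun i j => Y j i) with hX
  have hHX : H * ϱperp = ψperp * X := by
    ext i j
    have := congrFun (hY j) i
    simp only [Matrix.mulVec, dotProduct] at this
    rw [← this]
    simp [Matrix.mul_apply, hX]
  -- ψperpᵀψperp is a unit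
  have hrk : (ψperpᵀ * ψperp).rank = p - s := by
    rw [Matrix.rank_transpose_mul_self, hψperpr]
  have hunit : IsUnit (ψperpᵀ * ψperp) := by
    rw [← Matrix.mulVec_surjective_iff_isUnit]
    have htop : LinearMap.range (ψperpᵀ * ψperp).mulVecLin = ⊤ := by
      apply Submodule.eq_top_of_finrank_eq
      rw [show Module.finrank ℝ (Fin (p-s) → ℝ) = p - s by simp]
      exact hrk
    intro v
    have : v ∈ LinearMap.range (ψperpᵀ * ψperp).mulVecLin := htop ▸ Submodule.mem_top
    obtain ⟨w, hw⟩ := this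
    exact ⟨w, hw⟩
  have hinv : (ψperpᵀ * ψperp)⁻¹ * (ψperpᵀ * ψperp) = 1 :=
    Matrix.nonsing_inv_mul _ ((Matrix.isUnit_iff_isUnit_det _).mp hunit)
  have hg : (ψperpᵀ * ψperp)⁻¹ * ψperpᵀ * H * ϱperp = X := by
    rw [Matrix.mul_assoc ((ψperpᵀ * ψperp)⁻¹ * ψperpᵀ) H ϱperp, hHX,
      Matrix.mul_assoc, ← Matrix.mul_assoc ψperpᵀ, ← Matrix.mul_assoc,
      hinv, Matrix.one_mul]
  have hXrank : X.rank = m - q := by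
    have h1 : (ψperp * X).rank = X.rank := aux_rank_mul ψperp X hψperpr
    have h2 : (H * ϱperp).rank = ϱperp.rank := aux_rank_mul H ϱperp hH
    rw [← h1, ← hHX, h2, hϱperpr]
  refine ⟨by rw [hg, ← hHX], by rw [hg, hXrank], ?_⟩
  calc m - q = X.rank := hXrank.symm
    _ ≤ p - s := X.rank_le_height
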